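/- arXiv:2404.01347 — 5 statements merged into one kernel-verified Lean document; each statement's English description precedes it below -/
import Mathlib

section
/- For any uncertain sequence S over items I whose events take values in [0,1] (i.e., 0 ≤ p(i) ≤ 1 for every event p of S and every item i), and any patterns α and α' with α ⊑ α' (α a subpattern of α'), we have maxPr_S(α) ≥ maxPr_S(α'). -/
open scoped Classical

noncomputable section

variable {I : Type*}

/-- `js` is an occurrence of pattern `α` in uncertain sequence `S`:
a strictly increasing list of 1-based positions `1 ≤ j₁ < ⋯ < jₘ ≤ n`. -/
def IsOcc (S : List (I → ℝ)) (α : List (Finset I)) (js : List ℕ) : Prop :=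
  js.length = α.length ∧ List.Pairwise (· < ·) js ∧ ∀ j ∈ js, 1 ≤ j ∧ j ≤ S.length

/-- The probability of the occurrence `js` of pattern `α` in `S`:
`∏ₖ ∏_{i ∈ eₖ} p_{jₖ}(i)`. -/
def occProb (S : List (I → ℝ)) (α : List (Finset I)) (js : List ℕ) : ℝ :=
  ((α.zip js).map fun ej => ∏ i ∈ ej.1, S.getD (ej.2 - 1) (fun _ => (0 : ℝ)) i).prod

/-- `maxPr_S(α)`: the maximum occurrence probability of `α` in `S`
(`0` if there is no occurrence, since `sSup ∅ = 0` in `ℝ`; `1` for the empty pattern). -/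
def maxPr (S : List (I → ℝ)) (α : List (Finset I)) : ℝ :=
  sSup {x : ℝ | ∃ js, IsOcc S α js ∧ occProb S α js = x}

/-- `α ⊑ α'`: there are positions `j₁ < ⋯ < jₘ` in `α'` with `eₖ ⊆ e'_{jₖ}` for all `k`. -/
def IsSubpattern (α α' : List (Finset I)) : Prop :=
  ∃ β : List (Finset I), List.Forall₂ (· ⊆ ·) α β ∧ β.Sublist α'

/-- Expected support of `α` in a database `DB`. -/
def expSup (DB : List (List (I → ℝ))) (α : List (Finset I)) : ℝ :=
  (DB.map fun S => maxPr S α).sum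

/-- `maxPr_DB(α) = max_{S ∈ DB} maxPr_S(α)`, `0` for an empty database. -/
def maxPrDB (DB : List (List (I → ℝ))) (α : List (Finset I)) : ℝ :=
  (DB.map fun S => maxPr S α).foldr max 0

/-- `expSup^cap_DB(β ++ ⟨{i}⟩) = maxPr_DB(β) · Σ_{S ∈ DB} maxPr_S(⟨{i}⟩)`. -/
def expSupCap (DB : List (List (I → ℝ))) (β : List (Finset I)) (i : I) : ℝ :=
  maxPrDB DB β * expSup DB [{i}]

/-- Support count of item `i`: the number of sequences `S ∈ DB` with `maxPr_S(⟨{i}⟩) > 0`. -/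
def supCount (DB : List (List (I → ℝ))) (i : I) : ℕ :=
  (DB.filter fun S => decide (0 < maxPr S [({i} : Finset I)])).length

/-- The set of items occurring in a pattern. -/
def pItems (α : List (Finset I)) : Finset I :=
  α.foldr (· ∪ ·) ∅

/-- The size of a pattern: total number of items counted across events. -/
def pSize (α : List (Finset I)) : ℕ :=
  (α.map Finset.card).sum

/-- `sWeight(α)`: the sum of the weights of all items of `α` divided by its size. -/
def sWeight (w : I → ℝ) (α : List (Finset I)) : ℝ :=
  (α.map fun e => ∑ i ∈ e, w i).sum / (pSize α : ℝ)

/-- `wgt^cap_F(α)`: the maximum of `w` over `F ∪ items(α)`. -/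
def wgtCap (w : I → ℝ) (F : Finset I) (α : List (Finset I)) : ℝ :=
  (F ∪ pItems α).fold max 0 w

/-- Weighted expected support: `WES_DB(α) = expSup_DB(α) · sWeight(α)`. -/
def WES (DB : List (List (I → ℝ))) (w : I → ℝ) (α : List (Finset I)) : ℝ :=
  expSup DB α * sWeight w α

/-- The SupCalc array `g_{S,α}(m)`: for nonempty `α`, the maximum probability of an
occurrence of `α` in `S` whose last position is `m` (`0` if none, in particular for `m = 0`);
for the empty pattern it is `1`. -/
def gArr (S : List (I → ℝ)) (α : List (Finset I)) (m : ℕ) : ℝ :=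
  if α = [] then 1
  else sSup {x : ℝ | ∃ js, IsOcc S α js ∧ js.getLast? = some m ∧ occProb S α js = x}

section Aux

variable {I : Type*}

lemma list_prod_mem_Icc {l : List ℝ} (h : ∀ x ∈ l, 0 ≤ x ∧ x ≤ 1) :
    0 ≤ l.prod ∧ l.prod ≤ 1 := by
  induction l with
  | nil => simp
  | cons a t ih =>
    obtain ⟨ha0, ha1⟩ := h a (by simp)
    obtain ⟨ht0, ht1⟩ := ih (fun x hx => h x (by simp [hx]))
    simp only [List.prod_cons]
    refine ⟨mul_nonneg ha0 ht0, ?_⟩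
    calc a * t.prod ≤ 1 * 1 := mul_le_mul ha1 ht1 ht0 zero_le_one
      _ = 1 := one_mul 1

lemma list_prod_sublist_le {l₁ l₂ : List ℝ} (hs : l₁.Sublist l₂)
    (h : ∀ x ∈ l₂, 0 ≤ x ∧ x ≤ 1) : l₂.prod ≤ l₁.prod := by
  induction hs with
  | slnil => exact le_refl _
  | @cons l₁ l₂ a hs ih =>
    have h2 : ∀ x ∈ l₂, 0 ≤ x ∧ x ≤ 1 := fun x hx => h x (by simp [hx])
    have := list_prod_mem_Icc h2
    simp only [List.prod_cons]
    calc a * l₂.prod ≤ l₂.prod := mul_le_of_le_one_left this.1 (h a (by simp)).2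
      _ ≤ l₁.prod := ih h2
  | @cons_cons l₁ l₂ a hs ih =>
    have h2 : ∀ x ∈ l₂, 0 ≤ x ∧ x ≤ 1 := fun x hx => h x (by simp [hx])
    simp only [List.prod_cons]
    exact mul_le_mul_of_nonneg_left (ih h2) (h a (by simp)).1

lemma finset_prod_subset_le {e e' : Finset I} (hsub : e ⊆ e') (p : I → ℝ)
    (hp : ∀ i, 0 ≤ p i ∧ p i ≤ 1) :
    ∏ i ∈ e', p i ≤ ∏ i ∈ e, p i := by
  rw [← Finset.prod_sdiff hsub]
  have h1 : ∏ i ∈ e' \ e, p i ≤ 1 :=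
    Finset.prod_le_one (fun i _ => (hp i).1) (fun i _ => (hp i).2)
  have h0 : 0 ≤ ∏ i ∈ e, p i := Finset.prod_nonneg (fun i _ => (hp i).1)
  calc (∏ i ∈ e' \ e, p i) * ∏ i ∈ e, p i ≤ 1 * ∏ i ∈ e, p i :=
        mul_le_mul_of_nonneg_right h1 h0
    _ = _ := one_mul _

lemma occProb_mono_events (S : List (I → ℝ))
    (hp : ∀ j : ℕ, ∀ i : I,
      0 ≤ (S.getD j (fun _ => (0:ℝ))) i ∧ (S.getD j (fun _ => (0:ℝ))) i ≤ 1)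
    {α β : List (Finset I)} (hab : List.Forall₂ (· ⊆ ·) α β) :
    ∀ js : List ℕ, occProb S β js ≤ occProb S α js := by
  induction hab with
  | nil => intro js; simp [occProb]
  | @cons e e' tα tβ he htl ih =>
    intro js
    cases js with
    | nil => simp [occProb]
    | cons j tj =>
      simp only [occProb, List.zip_cons_cons, List.map_cons, List.prod_cons]
      have h1 : (∏ i ∈ e', S.getD (j-1) (fun _ => (0:ℝ)) i)
          ≤ ∏ i ∈ e, S.getD (j-1) (fun _ => (0:ℝ)) i :=
        finset_prod_subset_le he _ (fun i => hp _ i)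
      have hb0 : 0 ≤ occProb S tβ tj :=
        (list_prod_mem_Icc (by
          rintro x hx
          simp only [List.mem_map] at hx
          obtain ⟨ej, _, rfl⟩ := hx
          exact ⟨Finset.prod_nonneg (fun i _ => (hp _ i).1),
            Finset.prod_le_one (fun i _ => (hp _ i).1) (fun i _ => (hp _ i).2)⟩)).1
      have ha0 : 0 ≤ ∏ i ∈ e, S.getD (j-1) (fun _ => (0:ℝ)) i :=
        Finset.prod_nonneg (fun i _ => (hp _ i).1)
      calc (∏ i ∈ e', S.getD (j-1) (fun _ => (0:ℝ)) i) * occProb S tβ tj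
          ≤ (∏ i ∈ e, S.getD (j-1) (fun _ => (0:ℝ)) i) * occProb S tβ tj :=
            mul_le_mul_of_nonneg_right h1 hb0
        _ ≤ _ := mul_le_mul_of_nonneg_left (ih tj) ha0

end Aux

/-- for an uncertain sequence with values in `[0,1]`,
`maxPr_S` is anti-monotone with respect to the subpattern relation. -/
theorem maxPr_antitone_of_subpattern
    (S : List (I → ℝ)) (hS : ∀ p ∈ S, ∀ i : I, 0 ≤ p i ∧ p i ≤ 1)
    (α α' : List (Finset I)) (h : IsSubpattern α α') :
    maxPr S α' ≤ maxPr S α := by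
  obtain ⟨β, hab, hba⟩ := h
  have hlen : α.length = β.length := hab.length_eq
  have hp : ∀ j : ℕ, ∀ i : I,
      0 ≤ (S.getD j (fun _ => (0:ℝ))) i ∧ (S.getD j (fun _ => (0:ℝ))) i ≤ 1 := by
    intro j i
    rcases lt_or_ge j S.length with hj | hj
    · rw [List.getD_eq_getElem _ _ hj]; exact hS _ (List.getElem_mem hj) i
    · rw [List.getD_eq_default _ _ hj]; exact ⟨le_refl 0, zero_le_one⟩
  have hfac : ∀ ej : Finset I × ℕ,
      0 ≤ (∏ i ∈ ej.1, S.getD (ej.2 - 1) (fun _ => (0:ℝ)) i) ∧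
        (∏ i ∈ ej.1, S.getD (ej.2 - 1) (fun _ => (0:ℝ)) i) ≤ 1 := by
    intro ej
    exact ⟨Finset.prod_nonneg (fun i _ => (hp _ i).1),
      Finset.prod_le_one (fun i _ => (hp _ i).1) (fun i _ => (hp _ i).2)⟩
  have hoccIcc : ∀ (γ : List (Finset I)) (js : List ℕ),
      0 ≤ occProb S γ js ∧ occProb S γ js ≤ 1 := by
    intro γ js
    exact list_prod_mem_Icc (by
      intro x hx
      simp only [List.mem_map] at hx
      obtain ⟨ej, _, rfl⟩ := hx
      exact hfac ej)
  have hbdd : BddAbove {x : ℝ | ∃ js, IsOcc S α js ∧ occProb S α js = x} := by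
    refine ⟨1, ?_⟩
    rintro x ⟨js, _, rfl⟩
    exact (hoccIcc α js).2
  have hnonneg : (0:ℝ) ≤ maxPr S α := by
    apply Real.sSup_nonneg
    rintro x ⟨js, _, rfl⟩
    exact (hoccIcc α js).1
  apply Real.sSup_le _ hnonneg
  rintro x ⟨js', ⟨hlen', hsort', hmem'⟩, rfl⟩
  have hfst : (α'.zip js').map Prod.fst = α' := List.map_fst_zip (le_of_eq hlen'.symm)
  have hsnd : (α'.zip js').map Prod.snd = js' := List.map_snd_zip (le_of_eq hlen')
  have hβ : β.Sublist ((α'.zip js').map Prod.fst) := by rw [hfst]; exact hba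
  obtain ⟨zs, hzs, hzsfst⟩ := List.sublist_map_iff.mp hβ
  set js : List ℕ := zs.map Prod.snd with hjs
  have hjs_sub : js.Sublist js' := by
    rw [← hsnd]; exact hzs.map Prod.snd
  have hjslen : js.length = α.length := by
    rw [hjs, List.length_map, hlen, hzsfst, List.length_map]
  have hocc : IsOcc S α js :=
    ⟨hjslen, hsort'.sublist hjs_sub, fun j hj => hmem' j (hjs_sub.mem hj)⟩
  have hzip : β.zip js = zs := by
    rw [hjs, hzsfst, ← List.unzip_fst, ← List.unzip_snd, List.zip_unzip]
  have step2 : occProb S α' js' ≤ occProb S β js := by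
    unfold occProb
    rw [hzip]
    apply list_prod_sublist_le (hzs.map _)
    intro x hx
    simp only [List.mem_map] at hx
    obtain ⟨ej, _, rfl⟩ := hx
    exact hfac ej
  have step1 : occProb S β js ≤ occProb S α js := occProb_mono_events S hp hab js
  calc occProb S α' js' ≤ occProb S α js := le_trans step2 step1
    _ ≤ maxPr S α := le_csSup hbdd ⟨js, hocc, rfl⟩
end
end

section
/- For any uncertain sequence S over items I whose events take nonnegative values (0 ≤ p(i) for every event p of S and every item i), and any patterns α and β, maxPr_S(α ++ β) ≤ maxPr_S(α) · maxPr_S(β), where α ++ β denotes the concatenation of the two lists of events. -/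
open scoped Classical

noncomputable section

variable {I : Type*}

section Aux

variable (S : List (I → ℝ))

lemma aux_entry_nonneg (hS : ∀ p ∈ S, ∀ i : I, 0 ≤ p i) (j : ℕ) (i : I) :
    0 ≤ S.getD j (fun _ => (0 : ℝ)) i := by
  by_cases h : j < S.length
  · rw [List.getD_eq_getElem _ _ h]
    exact hS _ (List.getElem_mem h) i
  · rw [List.getD_eq_default _ _ (le_of_not_gt h)]

lemma aux_occProb_nonneg (hS : ∀ p ∈ S, ∀ i : I, 0 ≤ p i) (γ : List (Finset I))
    (js : List ℕ) : 0 ≤ occProb S γ js := by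
  apply List.prod_nonneg
  intro x hx
  simp only [List.mem_map] at hx
  obtain ⟨ej, _, rfl⟩ := hx
  exact Finset.prod_nonneg fun i _ => aux_entry_nonneg S hS _ i

lemma aux_foldr_max_nonneg (l : List ℝ) : 0 ≤ l.foldr max 0 := by
  induction l with
  | nil => simp
  | cons a t ih => exact le_max_of_le_right ih

lemma aux_le_foldr_max (l : List ℝ) (x : ℝ) (hx : x ∈ l) : x ≤ l.foldr max 0 := by
  induction l with
  | nil => cases hx
  | cons a t ih =>
    rcases List.mem_cons.mp hx with rfl | h
    · exact le_max_left _ _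
    · exact le_max_of_le_right (ih h)

/-- Pointwise upper bound for entries. -/
def auxG (i : I) : ℝ := (S.map fun p => p i).foldr max 0

lemma aux_G_nonneg (i : I) : 0 ≤ auxG S i := aux_foldr_max_nonneg _

lemma aux_entry_le_G (hS : ∀ p ∈ S, ∀ i : I, 0 ≤ p i) (j : ℕ) (i : I) :
    S.getD j (fun _ => (0 : ℝ)) i ≤ auxG S i := by
  by_cases h : j < S.length
  · rw [List.getD_eq_getElem _ _ h]
    exact aux_le_foldr_max _ _ (List.mem_map.mpr ⟨_, List.getElem_mem h, rfl⟩)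
  · rw [List.getD_eq_default _ _ (le_of_not_gt h)]
    exact aux_G_nonneg S i

/-- An explicit upper bound for occurrence probabilities of `γ` in `S`. -/
def auxBound (γ : List (Finset I)) : ℝ := (γ.map fun e => ∏ i ∈ e, auxG S i).prod

lemma aux_occProb_le_bound (hS : ∀ p ∈ S, ∀ i : I, 0 ≤ p i) :
    ∀ (γ : List (Finset I)) (js : List ℕ), js.length = γ.length →
      occProb S γ js ≤ auxBound S γ := by
  intro γ
  induction γ with
  | nil =>
    intro js h
    simp only [List.length_nil, List.length_eq_zero_iff] at h
    subst h
    simp [occProb, auxBound]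
  | cons e γ' ih =>
    intro js h
    cases js with
    | nil => simp at h
    | cons j js' =>
      simp only [List.length_cons, Nat.add_right_cancel_iff] at h
      simp only [occProb, auxBound, List.zip_cons_cons, List.map_cons, List.prod_cons]
      have h1 : (∏ i ∈ e, S.getD (j - 1) (fun _ => (0 : ℝ)) i) ≤ ∏ i ∈ e, auxG S i :=
        Finset.prod_le_prod (fun i _ => aux_entry_nonneg S hS _ i)
          (fun i _ => aux_entry_le_G S hS _ i)
      have h2 := ih js' h
      exact mul_le_mul h1 h2 (aux_occProb_nonneg S hS γ' js')
        (Finset.prod_nonneg fun i _ => aux_G_nonneg S i)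

lemma aux_bddAbove (hS : ∀ p ∈ S, ∀ i : I, 0 ≤ p i) (γ : List (Finset I)) :
    BddAbove {x : ℝ | ∃ js, IsOcc S γ js ∧ occProb S γ js = x} := by
  refine ⟨auxBound S γ, ?_⟩
  rintro x ⟨js, ⟨hlen, _, _⟩, rfl⟩
  exact aux_occProb_le_bound S hS γ js hlen

lemma aux_maxPr_nonneg (hS : ∀ p ∈ S, ∀ i : I, 0 ≤ p i) (γ : List (Finset I)) :
    0 ≤ maxPr S γ := by
  apply Real.sSup_nonneg
  rintro x ⟨js, _, rfl⟩
  exact aux_occProb_nonneg S hS γ js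

end Aux

/-- for a sequence with nonnegative values,
`maxPr_S(α ++ β) ≤ maxPr_S(α) · maxPr_S(β)`. -/
theorem maxPr_append_le
    (S : List (I → ℝ)) (hS : ∀ p ∈ S, ∀ i : I, 0 ≤ p i)
    (α β : List (Finset I)) :
    maxPr S (α ++ β) ≤ maxPr S α * maxPr S β := by
  apply Real.sSup_le
  · rintro x ⟨js, ⟨hlen, hsort, hmem⟩, rfl⟩
    set js₁ := js.take α.length with hjs₁
    set js₂ := js.drop α.length with hjs₂
    have hlen' : js.length = α.length + β.length := by simpa using hlen
    have hlen₁ : js₁.length = α.length := by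
      simp [hjs₁, hlen']
    have hlen₂ : js₂.length = β.length := by
      simp [hjs₂, hlen']
    have h1 : IsOcc S α js₁ :=
      ⟨hlen₁, hsort.sublist (List.take_sublist _ _),
        fun j hj => hmem j (List.mem_of_mem_take hj)⟩
    have h2 : IsOcc S β js₂ :=
      ⟨hlen₂, hsort.sublist (List.drop_sublist _ _),
        fun j hj => hmem j (List.mem_of_mem_drop hj)⟩
    have hsplit : occProb S (α ++ β) js = occProb S α js₁ * occProb S β js₂ := by
      unfold occProb
      conv_lhs => rw [← List.take_append_drop α.length js]
      rw [List.zip_append hlen₁.symm, List.map_append, List.prod_append]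
    rw [hsplit]
    have hp1 : occProb S α js₁ ≤ maxPr S α :=
      le_csSup (aux_bddAbove S hS α) ⟨js₁, h1, rfl⟩
    have hp2 : occProb S β js₂ ≤ maxPr S β :=
      le_csSup (aux_bddAbove S hS β) ⟨js₂, h2, rfl⟩
    exact mul_le_mul hp1 hp2 (aux_occProb_nonneg S hS β js₂)
      (aux_maxPr_nonneg S hS α)
  · exact mul_nonneg (aux_maxPr_nonneg S hS α) (aux_maxPr_nonneg S hS β)
end
end

section
/- Let DB be a finite uncertain database whose events take values in [0,1]. If α ⊑ α' (α is a subpattern of α'), then expSup_DB(α) ≥ expSup_DB(α'). (Anti-monotonicity of expected support; part of Lemma 1.) -/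
open scoped Classical

noncomputable section

variable {I : Type*}

/-- Auxiliary: a sublist of `α'` induces, for any position list of the same length
as `α'`, a corresponding sublist of positions with a zipped sublist relation. -/
lemma zip_sublist_aux {X : Type*} {β α' : List X} (hsub : β.Sublist α') :
    ∀ js : List ℕ, js.length = α'.length →
    ∃ js', js'.length = β.length ∧ js'.Sublist js ∧ (β.zip js').Sublist (α'.zip js) := by
  induction hsub with
  | slnil => intro js h; exact ⟨[], rfl, List.nil_sublist _, by simp⟩
  | cons a hs ih =>
      intro js h
      cases js with
      | nil => simp at h
      | cons j t =>
        obtain ⟨js', h1, h2, h3⟩ := ih t (by simpa using h)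
        exact ⟨js', h1, h2.trans (List.sublist_cons_self j t),
          h3.trans (List.sublist_cons_self _ _)⟩
  | cons_cons a hs ih =>
      intro js h
      cases js with
      | nil => simp at h
      | cons j t =>
        obtain ⟨js', h1, h2, h3⟩ := ih t (by simpa using h)
        exact ⟨j :: js', by simp [h1], h2.cons₂ j, by simpa using h3.cons₂ (a, j)⟩

/-- Product over a sublist dominates the full product for reals in `[0,1]`. -/
lemma prod_sublist_ge {l l' : List ℝ} (h : l.Sublist l')
    (h0 : ∀ x ∈ l', 0 ≤ x) (h1 : ∀ x ∈ l', x ≤ 1) : l'.prod ≤ l.prod := by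
  induction h with
  | slnil => exact le_rfl
  | @cons l₁ l₂ a hs ih =>
      simp only [List.prod_cons]
      have h2 : l₂.prod ≤ l₁.prod := ih (fun x hx => h0 x (List.mem_cons_of_mem a hx))
        (fun x hx => h1 x (List.mem_cons_of_mem a hx))
      have hp : 0 ≤ l₂.prod :=
        List.prod_nonneg (fun x hx => h0 x (List.mem_cons_of_mem a hx))
      calc a * l₂.prod ≤ 1 * l₂.prod :=
              mul_le_mul_of_nonneg_right (h1 a List.mem_cons_self) hp
        _ = l₂.prod := one_mul _
        _ ≤ l₁.prod := h2
  | cons_cons a hs ih =>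
      simp only [List.prod_cons]
      exact mul_le_mul_of_nonneg_left
        (ih (fun x hx => h0 x (List.mem_cons_of_mem a hx))
          (fun x hx => h1 x (List.mem_cons_of_mem a hx)))
        (h0 a List.mem_cons_self)

section PerSeq

variable (S : List (I → ℝ))

/-- Abbreviation for the event function selected at a position. -/
private def gFun (j : ℕ) : I → ℝ := S.getD (j - 1) (fun _ => (0 : ℝ))

lemma gFun_bounds (hS : ∀ p ∈ S, ∀ i : I, 0 ≤ p i ∧ p i ≤ 1)
    {j : ℕ} (hj : 1 ≤ j ∧ j ≤ S.length) (i : I) :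
    0 ≤ gFun S j i ∧ gFun S j i ≤ 1 := by
  have hlt : j - 1 < S.length := by omega
  have heq : S.getD (j - 1) (fun _ => (0 : ℝ)) = S[j - 1] :=
    List.getD_eq_getElem S _ hlt
  unfold gFun
  rw [heq]
  exact hS _ (List.getElem_mem hlt) i

lemma factor_bounds (hS : ∀ p ∈ S, ∀ i : I, 0 ≤ p i ∧ p i ≤ 1)
    {j : ℕ} (hj : 1 ≤ j ∧ j ≤ S.length) (e : Finset I) :
    0 ≤ ∏ i ∈ e, gFun S j i ∧ ∏ i ∈ e, gFun S j i ≤ 1 := by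
  constructor
  · exact Finset.prod_nonneg fun i _ => (gFun_bounds S hS hj i).1
  · exact Finset.prod_le_one (fun i _ => (gFun_bounds S hS hj i).1)
      (fun i _ => (gFun_bounds S hS hj i).2)

lemma occProb_eq (α : List (Finset I)) (js : List ℕ) :
    occProb S α js = ((α.zip js).map fun ej => ∏ i ∈ ej.1, gFun S ej.2 i).prod := rfl

lemma occProb_nonneg (hS : ∀ p ∈ S, ∀ i : I, 0 ≤ p i ∧ p i ≤ 1)
    (α : List (Finset I)) (js : List ℕ) (hjs : ∀ j ∈ js, 1 ≤ j ∧ j ≤ S.length) :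
    0 ≤ occProb S α js := by
  rw [occProb_eq]
  apply List.prod_nonneg
  intro x hx
  obtain ⟨ej, hej, rfl⟩ := List.mem_map.mp hx
  exact (factor_bounds S hS (hjs _ (List.of_mem_zip hej).2) ej.1).1

lemma occProb_le_one (hS : ∀ p ∈ S, ∀ i : I, 0 ≤ p i ∧ p i ≤ 1)
    (α : List (Finset I)) (js : List ℕ) (hjs : ∀ j ∈ js, 1 ≤ j ∧ j ≤ S.length) :
    occProb S α js ≤ 1 := by
  rw [occProb_eq]
  have := prod_sublist_ge (List.nil_sublist ((α.zip js).map fun ej => ∏ i ∈ ej.1, gFun S ej.2 i))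
    ?_ ?_
  · simpa using this
  all_goals
    intro x hx
    obtain ⟨ej, hej, rfl⟩ := List.mem_map.mp hx
  · exact (factor_bounds S hS (hjs _ (List.of_mem_zip hej).2) ej.1).1
  · exact (factor_bounds S hS (hjs _ (List.of_mem_zip hej).2) ej.1).2

/-- Pointwise (Forall₂) comparison of zipped products: shrinking each event
can only increase the occurrence probability. -/
lemma key_forall₂ (hS : ∀ p ∈ S, ∀ i : I, 0 ≤ p i ∧ p i ≤ 1) :
    ∀ {α β : List (Finset I)} (js : List ℕ), List.Forall₂ (· ⊆ ·) α β →
    (∀ j ∈ js, 1 ≤ j ∧ j ≤ S.length) →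
    ((β.zip js).map fun ej => ∏ i ∈ ej.1, gFun S ej.2 i).prod ≤
      ((α.zip js).map fun ej => ∏ i ∈ ej.1, gFun S ej.2 i).prod := by
  intro α β js hf
  induction hf generalizing js with
  | nil => intro _; simp
  | @cons e e' l l' hee hll ih =>
      intro hjs
      cases js with
      | nil => simp
      | cons j t =>
        simp only [List.zip_cons_cons, List.map_cons, List.prod_cons]
        have hj : 1 ≤ j ∧ j ≤ S.length := hjs j List.mem_cons_self
        have ht : ∀ j' ∈ t, 1 ≤ j' ∧ j' ≤ S.length :=
          fun j' hj' => hjs j' (List.mem_cons_of_mem j hj')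
        have hF : ∏ i ∈ e', gFun S j i ≤ ∏ i ∈ e, gFun S j i := by
          rw [← Finset.prod_sdiff hee]
          calc (∏ i ∈ e' \ e, gFun S j i) * ∏ i ∈ e, gFun S j i
              ≤ 1 * ∏ i ∈ e, gFun S j i :=
                mul_le_mul_of_nonneg_right (factor_bounds S hS hj _).2
                  (factor_bounds S hS hj e).1
            _ = _ := one_mul _
        apply mul_le_mul hF (ih t ht) ?_ (factor_bounds S hS hj e).1
        apply List.prod_nonneg
        intro x hx
        obtain ⟨ej, hej, rfl⟩ := List.mem_map.mp hx
        exact (factor_bounds S hS (ht _ (List.of_mem_zip hej).2) ej.1).1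

lemma maxPr_nonneg (hS : ∀ p ∈ S, ∀ i : I, 0 ≤ p i ∧ p i ≤ 1)
    (α : List (Finset I)) : 0 ≤ maxPr S α := by
  apply Real.sSup_nonneg
  rintro x ⟨js, hocc, rfl⟩
  exact occProb_nonneg S hS α js hocc.2.2

lemma maxPr_bddAbove (hS : ∀ p ∈ S, ∀ i : I, 0 ≤ p i ∧ p i ≤ 1)
    (α : List (Finset I)) :
    BddAbove {x : ℝ | ∃ js, IsOcc S α js ∧ occProb S α js = x} := by
  refine ⟨1, ?_⟩
  rintro x ⟨js, hocc, rfl⟩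
  exact occProb_le_one S hS α js hocc.2.2

lemma maxPr_mono (hS : ∀ p ∈ S, ∀ i : I, 0 ≤ p i ∧ p i ≤ 1)
    {α α' : List (Finset I)} (h : IsSubpattern α α') :
    maxPr S α' ≤ maxPr S α := by
  obtain ⟨β, hαβ, hβ⟩ := h
  apply Real.sSup_le _ (maxPr_nonneg S hS α)
  rintro x ⟨js, hocc, rfl⟩
  obtain ⟨hlen, hsort, hrange⟩ := hocc
  obtain ⟨js', h1, h2, h3⟩ := zip_sublist_aux hβ js hlen
  have hocc' : IsOcc S α js' :=
    ⟨h1.trans hαβ.length_eq.symm, hsort.sublist h2,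
     fun j hj => hrange j (h2.subset hj)⟩
  have step1 : occProb S α' js ≤
      ((β.zip js').map fun ej => ∏ i ∈ ej.1, gFun S ej.2 i).prod := by
    rw [occProb_eq]
    apply prod_sublist_ge (h3.map _)
    all_goals
      intro x hx
      obtain ⟨ej, hej, rfl⟩ := List.mem_map.mp hx
    · exact (factor_bounds S hS (hrange _ (List.of_mem_zip hej).2) ej.1).1
    · exact (factor_bounds S hS (hrange _ (List.of_mem_zip hej).2) ej.1).2
  have step2 := key_forall₂ S hS js' hαβ hocc'.2.2
  rw [← occProb_eq] at step2
  exact le_csSup (maxPr_bddAbove S hS α) ⟨js', hocc', rfl⟩ |>.trans' (step1.trans step2)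

end PerSeq

/-- part of Lemma 1: anti-monotonicity of expected support
over a database with values in `[0,1]`. -/
theorem expSup_antitone_of_subpattern
    (DB : List (List (I → ℝ)))
    (hDB : ∀ S ∈ DB, ∀ p ∈ S, ∀ i : I, 0 ≤ p i ∧ p i ≤ 1)
    (α α' : List (Finset I)) (h : IsSubpattern α α') :
    expSup DB α' ≤ expSup DB α := by
  unfold expSup
  induction DB with
  | nil => simp
  | cons S DB ih =>
      simp only [List.map_cons, List.sum_cons]
      have h1 := maxPr_mono S (hDB S List.mem_cons_self) h
      have h2 := ih (fun S' hS' => hDB S' (List.mem_cons_of_mem S hS'))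
      exact add_le_add h1 h2
end
end

section
/- Weighted expected support is not anti-monotone: there exist a finite uncertain database DB over items ℕ all of whose events take values in [0,1], a weight function w : ℕ → ℝ with 0 ≤ w(i) ≤ 1 for all i, and nonempty patterns α and α' with α ⊑ α' (α a proper subpattern of α') such that WES_DB(α) < WES_DB(α'). -/
open scoped Classical

noncomputable section

variable {I : Type*}

lemma occ_set_single (p : ℕ → ℝ) (e : Finset ℕ) :
    {x : ℝ | ∃ js, IsOcc [p] [e] js ∧ occProb [p] [e] js = x} = {∏ i ∈ e, p i} := by
  ext x
  simp only [Set.mem_setOf_eq, Set.mem_singleton_iff]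
  constructor
  · rintro ⟨js, ⟨hlen, hsort, hb⟩, rfl⟩
    simp only [List.length_singleton] at hlen
    obtain ⟨j, rfl⟩ := List.length_eq_one_iff.mp hlen
    have hj := hb j (by simp)
    simp only [List.length_singleton] at hj
    have : j = 1 := le_antisymm hj.2 hj.1
    subst this
    simp [occProb]
  · rintro rfl
    exact ⟨[1], ⟨rfl, by simp, by simp⟩, by simp [occProb]⟩

lemma maxPr_single (p : ℕ → ℝ) (e : Finset ℕ) :
    maxPr [p] [e] = ∏ i ∈ e, p i := by
  rw [maxPr, occ_set_single, csSup_singleton]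

/-- weighted expected support is not anti-monotone: there are a
database with values in `[0,1]`, weights in `[0,1]`, and nonempty patterns
`α ⊑ α'` with `α ≠ α'` such that `WES_DB(α) < WES_DB(α')`. -/
theorem WES_not_antitone :
    ∃ (DB : List (List (ℕ → ℝ))) (w : ℕ → ℝ) (α α' : List (Finset ℕ)),
      (∀ S ∈ DB, ∀ p ∈ S, ∀ i : ℕ, 0 ≤ p i ∧ p i ≤ 1) ∧
      (∀ i : ℕ, 0 ≤ w i ∧ w i ≤ 1) ∧
      α ≠ [] ∧ α' ≠ [] ∧ IsSubpattern α α' ∧ α ≠ α' ∧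
      WES DB w α < WES DB w α' := by
  refine ⟨[[fun _ => (1 : ℝ)]], fun i => if i = 0 then 0 else 1,
    [({0} : Finset ℕ)], [({0, 1} : Finset ℕ)], ?_, ?_, ?_, ?_, ?_, ?_, ?_⟩
  · intro S hS q hq i
    simp only [List.mem_singleton] at hS
    subst hS
    simp only [List.mem_singleton] at hq
    subst hq; norm_num
  · intro i; by_cases h : i = 0 <;> simp [h]
  · simp
  · simp
  · exact ⟨[({0, 1} : Finset ℕ)], by simp [Finset.singleton_subset_iff], by simp⟩
  · intro h
    have h1 : (1 : ℕ) ∈ ({0} : Finset ℕ) := by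
      simp only [List.cons.injEq] at h
      rw [h.1]; simp
    simp at h1
  · have h1 : WES [[fun _ => (1 : ℝ)]] (fun i => if i = 0 then 0 else 1)
        [({0} : Finset ℕ)] = 0 := by
      simp [WES, expSup, maxPr_single, sWeight]
    have h2 : WES [[fun _ => (1 : ℝ)]] (fun i => if i = 0 then 0 else 1)
        [({0, 1} : Finset ℕ)] = 1 / 2 := by
      simp [WES, expSup, maxPr_single, sWeight, pSize]
    rw [h1, h2]; norm_num
end
end

section
/- Correctness of the SupCalc update for i-extensions: let S = ⟨p₁, …, pₙ⟩ be an uncertain sequence whose events take nonnegative values, let α = ⟨e₁, …, eₘ⟩ be a nonempty pattern, and let i be an item with i ∉ eₘ. Let α' = ⟨e₁, …, e_{m-1}, eₘ ∪ {i}⟩ be the i-extension of α by i. Then for every position m' with 1 ≤ m' ≤ n, g_{S, α'}(m') = p_{m'}(i) · g_{S, α}(m'). -/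
open scoped Classical

noncomputable section

variable {I : Type*}

open Pointwise in
lemma occProb_insert_last (S : List (I → ℝ))
    (β : List (Finset I)) (e : Finset I) (i : I) (hi : i ∉ e)
    (m' : ℕ) (js : List ℕ) (hlen : js.length = β.length + 1)
    (hlast : js.getLast? = some m') :
    occProb S (β ++ [insert i e]) js =
      S.getD (m' - 1) (fun _ => (0 : ℝ)) i * occProb S (β ++ [e]) js := by
  obtain ⟨ks, rfl⟩ : ∃ ks, ks ++ [m'] = js :=
    ⟨js.dropLast, List.dropLast_append_getLast? _ hlast⟩
  have hk : ks.length = β.length := by simpa using hlen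
  have hz : ∀ X : Finset I, (β ++ [X]).zip (ks ++ [m']) = β.zip ks ++ [(X, m')] := by
    intro X
    rw [List.zip_append (by omega)]
    simp [List.zip]
  simp only [occProb, hz, List.map_append, List.prod_append, List.map_cons, List.map_nil,
    List.prod_cons, List.prod_nil, Finset.prod_insert hi]
  ring

open Pointwise in
/-- correctness of the SupCalc update for i-extensions: for a
nonempty pattern `β ++ ⟨e⟩` and an item `i ∉ e`,
`g_{S, β ++ ⟨e ∪ {i}⟩}(m') = p_{m'}(i) · g_{S, β ++ ⟨e⟩}(m')` for `1 ≤ m' ≤ n`. -/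
theorem gArr_iExtension
    (S : List (I → ℝ)) (hS : ∀ p ∈ S, ∀ i : I, 0 ≤ p i)
    (β : List (Finset I)) (e : Finset I) (i : I) (hi : i ∉ e)
    (m' : ℕ) (hm1 : 1 ≤ m') (hm2 : m' ≤ S.length) :
    gArr S (β ++ [insert i e]) m' =
      S.getD (m' - 1) (fun _ => (0 : ℝ)) i * gArr S (β ++ [e]) m' := by
  set c := S.getD (m' - 1) (fun _ => (0 : ℝ)) i with hc
  have hc0 : 0 ≤ c := by
    have hlt : m' - 1 < S.length := by omega
    rw [hc, List.getD_eq_getElem _ _ hlt]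
    exact hS _ (List.getElem_mem _) i
  rw [gArr, gArr, if_neg (by simp), if_neg (by simp)]
  have hset : {x : ℝ | ∃ js, IsOcc S (β ++ [insert i e]) js ∧ js.getLast? = some m' ∧
        occProb S (β ++ [insert i e]) js = x} =
      c • {x : ℝ | ∃ js, IsOcc S (β ++ [e]) js ∧ js.getLast? = some m' ∧
        occProb S (β ++ [e]) js = x} := by
    ext x
    simp only [Set.mem_smul_set, Set.mem_setOf_eq, smul_eq_mul]
    constructor
    · rintro ⟨js, hocc, hlast, rfl⟩
      have hlen : js.length = β.length + 1 := by simpa using hocc.1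
      refine ⟨occProb S (β ++ [e]) js, ⟨js, ?_, hlast, rfl⟩, ?_⟩
      · exact ⟨by simpa using hocc.1, hocc.2⟩
      · exact (occProb_insert_last S β e i hi m' js hlen hlast).symm
    · rintro ⟨y, ⟨js, hocc, hlast, rfl⟩, rfl⟩
      have hlen : js.length = β.length + 1 := by simpa using hocc.1
      exact ⟨js, ⟨by simpa using hocc.1, hocc.2⟩, hlast,
        occProb_insert_last S β e i hi m' js hlen hlast⟩
  rw [hset, Real.sSup_smul_of_nonneg hc0, smul_eq_mul]
end
end
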